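/- Proposition 5′ (bosonic case) / Proposition 5, equation (prop5:1). Let μ ≥ 2 be an integer, let w₀, w₀' be free complex variables, and let (w_j, w_j') for j = 1, …, μ−1 be pairs all carrying the bosonic exchange factor H^b. Define D(u, u') = (u' − q w₁)(w₁' − q u) · Π_{j=1}^{μ−2} (w_j' − q w_{j+1})(w_{j+1}' − q w_j). Then D(w₀', w₀) ∼ D(w₀, w₀') with respect to the pairs (w₁, w₁'), …, (w_{μ−1}, w_{μ−1}'). (This is Proposition 5′, eq. (prop5:3), for ŝl(M|0) with 2 ≤ μ ≤ M, and equals Proposition 5, eq. (prop5:1), for ŝl(M|N) with 2 ≤ μ ≤ M, since all pairs involved are bosonic.) -/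

import Mathlib

/-- Bosonic exchange factor `H^b(u,v) = -(q²v - u)/(q²u - v)`. -/
noncomputable def Hb (q u v : ℂ) : ℂ := -(q ^ 2 * v - u) / (q ^ 2 * u - v)

/-- Fermionic exchange factor `H^f(u,v) = -(q²u - v)/(q²v - u)`. -/
noncomputable def Hf (q u v : ℂ) : ℂ := -(q ^ 2 * u - v) / (q ^ 2 * v - u)

/-- Exchange factor assignment for `U_q(sl^(M|N))`: bosonic for `j < M`,
the constant `-1` for `j = M`, fermionic for `j > M`. -/
noncomputable def Hex (M : ℕ) (q : ℂ) (j : ℕ) : ℂ → ℂ → ℂ :=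
  if j < M then Hb q else if j = M then fun _ _ => -1 else Hf q

/-- Interchange `w_j` and `w_j'` for every `j ∈ σ`. -/
def swapOn (σ : Finset ℕ) (w w' : ℕ → ℂ) : ℕ → ℂ := fun j => if j ∈ σ then w' j else w j

/-- Weak equality `F ∼ G` with respect to the pairs `(w_j, w_j')`, `j ∈ J`,
carrying exchange factors `H j`. -/
def WeakEq (J : Finset ℕ) (H : ℕ → ℂ → ℂ → ℂ) (w w' : ℕ → ℂ)
    (F G : (ℕ → ℂ) → (ℕ → ℂ) → ℂ) : Prop :=
  ∑ σ ∈ J.powerset, (∏ j ∈ σ, H j (w' j) (w j)) * F (swapOn σ w w') (swapOn σ w' w)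
    = ∑ σ ∈ J.powerset, (∏ j ∈ σ, H j (w' j) (w j)) * G (swapOn σ w w') (swapOn σ w' w)

/-- `D(u, u') = (u' − q w₁)(w₁' − q u) · Π_{j=1}^{μ−2} (w_j' − q w_{j+1})(w_{j+1}' − q w_j)`. -/
noncomputable def Dbos (q : ℂ) (μ : ℕ) (x y : ℂ) (u u' : ℕ → ℂ) : ℂ :=
  (y - q * u 1) * (u' 1 - q * x) *
    ∏ j ∈ Finset.Ico 1 (μ - 1), (u' j - q * u (j + 1)) * (u' (j + 1) - q * u j)

/-!
Since `D(x, y) − D(y, x) = (y − x)(w₁' − q² w₁) · Π`, and the pair `(w₀, w₀')` is not exchanged,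
it suffices that the exchange sum of `E_a(w, w') = (w_a' − q² w_a) Π_{j ≥ a} (w_j' − q w_{j+1})(w_{j+1}' − q w_j)`
vanishes. Summing over the two states of the pair `a` uses only
`H^b(w_a', w_a) (w_a − q² w_a') = q² w_a − w_a'`, and turns `E_a` into
`(w_a' − q² w_a)(w_a' − w_a) E_{a+1}`; at the last pair the two states cancel outright.
-/

open Finset Function

def exchangeSum (J : Finset ℕ) (H : ℕ → ℂ → ℂ → ℂ) (w w' : ℕ → ℂ)
    (F : (ℕ → ℂ) → (ℕ → ℂ) → ℂ) : ℂ :=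
  ∑ σ ∈ J.powerset, (∏ j ∈ σ, H j (w' j) (w j)) * F (swapOn σ w w') (swapOn σ w' w)

theorem weakEq_iff_exchangeSum_eq {J : Finset ℕ} {H : ℕ → ℂ → ℂ → ℂ} {w w' : ℕ → ℂ}
    {F G : (ℕ → ℂ) → (ℕ → ℂ) → ℂ} :
    WeakEq J H w w' F G ↔ exchangeSum J H w w' F = exchangeSum J H w w' G :=
  Iff.rfl

theorem swapOn_of_notMem {σ : Finset ℕ} (w w' : ℕ → ℂ) {j : ℕ} (h : j ∉ σ) :
    swapOn σ w w' j = w j := by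
  simp [swapOn, h]

theorem swapOn_insert (σ : Finset ℕ) (w w' : ℕ → ℂ) (a : ℕ) :
    swapOn (insert a σ) w w' = update (swapOn σ w w') a (w' a) := by
  funext j
  by_cases hj : j = a
  · subst hj; simp [swapOn]
  · simp [swapOn, hj]

section exchangeSum

variable {J : Finset ℕ} {H : ℕ → ℂ → ℂ → ℂ} {w w' : ℕ → ℂ}

theorem exchangeSum_sub (F G : (ℕ → ℂ) → (ℕ → ℂ) → ℂ) :
    exchangeSum J H w w' (fun u u' => F u u' - G u u') =
      exchangeSum J H w w' F - exchangeSum J H w w' G := by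
  simp only [exchangeSum, mul_sub, sum_sub_distrib]

theorem exchangeSum_const_mul (c : ℂ) (F : (ℕ → ℂ) → (ℕ → ℂ) → ℂ) :
    exchangeSum J H w w' (fun u u' => c * F u u') = c * exchangeSum J H w w' F := by
  simp only [exchangeSum, mul_sum, mul_left_comm]

theorem exchangeSum_mul_of_notMem {k : ℕ} (hk : k ∉ J) (f : ℂ → ℂ → ℂ)
    (F : (ℕ → ℂ) → (ℕ → ℂ) → ℂ) :
    exchangeSum J H w w' (fun u u' => f (u k) (u' k) * F u u') =
      f (w k) (w' k) * exchangeSum J H w w' F := by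
  rw [exchangeSum, exchangeSum, mul_sum]
  refine sum_congr rfl fun σ hσ => ?_
  have hkσ : k ∉ σ := fun h => hk (mem_powerset.mp hσ h)
  rw [swapOn_of_notMem w w' hkσ, swapOn_of_notMem w' w hkσ, mul_left_comm]

theorem exchangeSum_insert {a : ℕ} (ha : a ∉ J) (F : (ℕ → ℂ) → (ℕ → ℂ) → ℂ) :
    exchangeSum (insert a J) H w w' F =
      exchangeSum J H w w' (fun u u' => F (update u a (w a)) (update u' a (w' a)) +
        H a (w' a) (w a) * F (update u a (w' a)) (update u' a (w a))) := by
  rw [exchangeSum, exchangeSum, sum_powerset_insert ha, ← sum_add_distrib]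
  refine sum_congr rfl fun σ hσ => ?_
  have haσ : a ∉ σ := fun h => ha (mem_powerset.mp hσ h)
  have hfix : ∀ v v' : ℕ → ℂ, update (swapOn σ v v') a (v a) = swapOn σ v v' := fun v v' => by
    conv_lhs => rw [← swapOn_of_notMem v v' haσ]
    exact update_eq_self a _
  rw [prod_insert haσ, swapOn_insert, swapOn_insert, hfix, hfix]
  ring

end exchangeSum

def bosLink (q : ℂ) (u u' : ℕ → ℂ) (j : ℕ) : ℂ :=
  (u' j - q * u (j + 1)) * (u' (j + 1) - q * u j)

/-- `E_a` of the header, for the pairs `a, …, b − 1`. -/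
def bosTail (q : ℂ) (a b : ℕ) (u u' : ℕ → ℂ) : ℂ :=
  (u' a - q ^ 2 * u a) * ∏ j ∈ Ico a (b - 1), bosLink q u u' j

theorem Hb_mul_sub {q A A' : ℂ} (h : q ^ 2 * A' ≠ A) :
    Hb q A' A * (A - q ^ 2 * A') = q ^ 2 * A - A' := by
  have h' : q ^ 2 * A' - A ≠ 0 := sub_ne_zero.mpr h
  rw [Hb, div_mul_eq_mul_div, div_eq_iff h']
  ring

section bosTail

variable {q : ℂ} {a : ℕ} {u u' : ℕ → ℂ} {A A' : ℂ}

theorem prod_bosLink_update (c : ℕ) :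
    ∏ j ∈ Ico (a + 1) c, bosLink q (update u a A) (update u' a A') j =
      ∏ j ∈ Ico (a + 1) c, bosLink q u u' j := by
  refine prod_congr rfl fun j hj => ?_
  have hj : a < j := (mem_Ico.mp hj).1
  simp only [bosLink, update_of_ne hj.ne', update_of_ne (show j + 1 ≠ a by omega)]

theorem bosTail_succ_update_add (h : q ^ 2 * A' ≠ A) :
    bosTail q a (a + 1) (update u a A) (update u' a A') +
      Hb q A' A * bosTail q a (a + 1) (update u a A') (update u' a A) = 0 := by
  simp only [bosTail, add_tsub_cancel_right, Ico_self, prod_empty, mul_one, update_self]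
  linear_combination Hb_mul_sub h

theorem bosTail_update_add {b : ℕ} (hab : a + 1 < b) (h : q ^ 2 * A' ≠ A) :
    bosTail q a b (update u a A) (update u' a A') +
      Hb q A' A * bosTail q a b (update u a A') (update u' a A) =
      (A' - q ^ 2 * A) * (A' - A) * bosTail q (a + 1) b u u' := by
  simp only [bosTail, prod_eq_prod_Ico_succ_bot (show a < b - 1 by omega), prod_bosLink_update]
  set R := ∏ j ∈ Ico (a + 1) (b - 1), bosLink q u u' j
  simp only [bosLink, update_self, update_of_ne (show a + 1 ≠ a by omega)]
  linear_combination ((A - q * u (a + 1)) * (u' (a + 1) - q * A') * R) * Hb_mul_sub h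

end bosTail

theorem exchangeSum_bosTail (q : ℂ) (w w' : ℕ → ℂ) (n a : ℕ) (hn : 1 ≤ n)
    (hden : ∀ j ∈ Ico a (a + n), q ^ 2 * w' j ≠ w j) :
    exchangeSum (Ico a (a + n)) (fun _ => Hb q) w w' (bosTail q a (a + n)) = 0 := by
  induction n generalizing a with
  | zero => omega
  | succ n ih =>
    have ha : a ∉ Ico (a + 1) (a + (n + 1)) := by simp
    have hpair : q ^ 2 * w' a ≠ w a := hden a (by simp)
    rw [← insert_Ico_add_one_left_eq_Ico (by omega), exchangeSum_insert ha]
    rcases Nat.eq_zero_or_pos n with rfl | hpos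
    · simp only [bosTail_succ_update_add hpair]
      simp [exchangeSum]
    · simp only [bosTail_update_add (by omega : a + 1 < a + (n + 1)) hpair]
      rw [exchangeSum_const_mul, show a + (n + 1) = a + 1 + n by omega,
        ih (a + 1) hpos fun j hj => hden j (by simp only [mem_Ico] at hj ⊢; omega), mul_zero]

theorem Dbos_sub_Dbos (q : ℂ) (μ : ℕ) (u u' : ℕ → ℂ) :
    Dbos q μ (u' 0) (u 0) u u' - Dbos q μ (u 0) (u' 0) u u' =
      (u 0 - u' 0) * bosTail q 1 μ u u' := by
  simp only [Dbos, bosTail, bosLink]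
  ring

theorem proposition5_bosonic_general (μ : ℕ) (hμ : 2 ≤ μ)
    (q : ℂ) (w w' : ℕ → ℂ)
    (hden : ∀ j ∈ Finset.Ico 1 μ, q ^ 2 * w' j ≠ w j) :
    WeakEq (Finset.Ico 1 μ) (fun _ => Hb q) w w'
      (fun u u' => Dbos q μ (u' 0) (u 0) u u')
      (fun u u' => Dbos q μ (u 0) (u' 0) u u') := by
  rw [weakEq_iff_exchangeSum_eq, ← sub_eq_zero, ← exchangeSum_sub]
  simp only [Dbos_sub_Dbos]
  rw [exchangeSum_mul_of_notMem (by simp) (fun x x' => x - x'),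
    show μ = 1 + (μ - 1) by omega, exchangeSum_bosTail q w w' (μ - 1) 1 (by omega)
      fun j hj => hden j (by simp only [mem_Ico] at hj ⊢; omega), mul_zero]

/-- Proposition 5′ (bosonic case) / Proposition 5, eq. (prop5:1):
`D(w₀', w₀) ∼ D(w₀, w₀')` with respect to the bosonic pairs `(w₁, w₁'), …, (w_{μ−1}, w_{μ−1}')`. -/
theorem proposition5_bosonic (μ : ℕ) (hμ : 2 ≤ μ)
    (q : ℂ) (hq : q ≠ 0) (hq2 : q ^ 2 ≠ 1) (w w' : ℕ → ℂ)
    (hden : ∀ j ∈ Finset.Ico 1 μ, q ^ 2 * w' j ≠ w j) :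
    WeakEq (Finset.Ico 1 μ) (fun _ => Hb q) w w'
      (fun u u' => Dbos q μ (u' 0) (u 0) u u')
      (fun u u' => Dbos q μ (u 0) (u' 0) u u') :=
  proposition5_bosonic_general μ hμ q w w' hden
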